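/- arXiv:2404.17518 — 3 statements merged into one kernel-verified Lean document; each statement's English description precedes it below -/
import Mathlib

section
/- Let (𝔡,𝔤) be a Manin pair and 𝔠 ⊆ 𝔡 a Lie subalgebra with 𝔤 ⊆ 𝔠, and set 𝔨 = 𝔠^⊥. Then the quotient 𝔡' = 𝔠/𝔨 inherits a nondegenerate ad-invariant symmetric bilinear form from 𝔡 (defined by the metric of 𝔡 on representatives), and the image 𝔤' = 𝔤/𝔨 is a Lagrangian Lie subalgebra of 𝔡'. Thus (𝔡',𝔤') is again a Manin pair. -/
/-- The orthogonal complement of a subspace with respect to a bilinear form. -/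
def orth {V : Type*} [AddCommGroup V] [Module ℝ V]
    (B : V →ₗ[ℝ] V →ₗ[ℝ] ℝ) (W : Submodule ℝ V) : Submodule ℝ V where
  carrier := {x | ∀ w ∈ W, B x w = 0}
  add_mem' := by
    intro a b ha hb w hw
    simp only [Set.mem_setOf_eq] at *
    rw [map_add, LinearMap.add_apply, ha w hw, hb w hw, add_zero]
  zero_mem' := by intro w hw; simp
  smul_mem' := by
    intro c a ha w hw
    simp only [Set.mem_setOf_eq] at *
    rw [map_smul, LinearMap.smul_apply, ha w hw, smul_zero]

/-- Let (𝔡,𝔤) be a Manin pair and 𝔠 a subalgebra containing 𝔤, with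
𝔨 = 𝔠^⊥ (an ideal of 𝔠, given here as a Lie ideal `K` of `↥𝔠` whose elements are exactly
those of 𝔠^⊥).  Then the quotient 𝔡' = 𝔠/𝔨 inherits a nondegenerate ad-invariant symmetric
bilinear form `B'` (defined on representatives by the metric of 𝔡), and the image 𝔤' = 𝔤/𝔨
is a Lagrangian Lie subalgebra of 𝔡'; thus (𝔡',𝔤') is again a Manin pair. -/
theorem stmt1 (𝔡 : Type*) [LieRing 𝔡] [LieAlgebra ℝ 𝔡]
    (B : 𝔡 →ₗ[ℝ] 𝔡 →ₗ[ℝ] ℝ)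
    (hsymm : ∀ x y : 𝔡, B x y = B y x)
    (hnondeg : ∀ x : 𝔡, (∀ y : 𝔡, B x y = 0) → x = 0)
    (hinv : ∀ x y z : 𝔡, B ⁅x, y⁆ z + B y ⁅x, z⁆ = 0)
    (𝔤 𝔠 : LieSubalgebra ℝ 𝔡) (h𝔤𝔠 : 𝔤 ≤ 𝔠)
    (hLag : orth B 𝔤.toSubmodule = 𝔤.toSubmodule)
    (K : LieIdeal ℝ ↥𝔠)
    (hK : ∀ x : ↥𝔠, x ∈ K ↔ (x : 𝔡) ∈ orth B 𝔠.toSubmodule) :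
    ∃ B' : (↥𝔠 ⧸ K) →ₗ[ℝ] (↥𝔠 ⧸ K) →ₗ[ℝ] ℝ,
      -- B' is induced by B on representatives
      (∀ x y : ↥𝔠, B' (LieSubmodule.Quotient.mk (N := K) x)
          (LieSubmodule.Quotient.mk (N := K) y) = B (x : 𝔡) (y : 𝔡)) ∧
      -- B' is symmetric
      (∀ x y : ↥𝔠 ⧸ K, B' x y = B' y x) ∧
      -- B' is nondegenerate
      (∀ x : ↥𝔠 ⧸ K, (∀ y : ↥𝔠 ⧸ K, B' x y = 0) → x = 0) ∧
      -- B' is ad-invariant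
      (∀ x y z : ↥𝔠 ⧸ K, B' ⁅x, y⁆ z + B' y ⁅x, z⁆ = 0) ∧
      -- 𝔤' = 𝔤/𝔨 (the image of 𝔤 in the quotient) is a Lie subalgebra …
      (∀ x y : ↥𝔠 ⧸ K,
        (∃ g : ↥𝔠, (g : 𝔡) ∈ 𝔤 ∧ LieSubmodule.Quotient.mk (N := K) g = x) →
        (∃ g : ↥𝔠, (g : 𝔡) ∈ 𝔤 ∧ LieSubmodule.Quotient.mk (N := K) g = y) →
        (∃ g : ↥𝔠, (g : 𝔡) ∈ 𝔤 ∧ LieSubmodule.Quotient.mk (N := K) g = ⁅x, y⁆)) ∧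
      -- … and 𝔤' is Lagrangian in 𝔡'
      (∀ x : ↥𝔠 ⧸ K,
        (∃ g : ↥𝔠, (g : 𝔡) ∈ 𝔤 ∧ LieSubmodule.Quotient.mk (N := K) g = x) ↔
        (∀ y : ↥𝔠 ⧸ K,
          (∃ g : ↥𝔠, (g : 𝔡) ∈ 𝔤 ∧ LieSubmodule.Quotient.mk (N := K) g = y) →
          B' x y = 0)) := by
    classical
  -- Bc : bilinear form on ↥𝔠
  set Bc : ↥𝔠 →ₗ[ℝ] ↥𝔠 →ₗ[ℝ] ℝ := B.compl₁₂ 𝔠.toSubmodule.subtype 𝔠.toSubmodule.subtype with hBc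
  have hBc_apply : ∀ x y : ↥𝔠, Bc x y = B (x : 𝔡) (y : 𝔡) := fun x y => rfl
  have hker2 : ∀ x : ↥𝔠, K.toSubmodule ≤ LinearMap.ker (Bc x) := by
    intro x k hk
    have := (hK k).mp hk
    simp only [LinearMap.mem_ker]
    rw [hBc_apply, hsymm]
    exact this (x : 𝔡) x.2
  -- lift in second argument
  set Bc2 : ↥𝔠 →ₗ[ℝ] (↥𝔠 ⧸ K) →ₗ[ℝ] ℝ :=
    { toFun := fun x => Submodule.liftQ K.toSubmodule (Bc x) (hker2 x)
      map_add' := by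
        intro a b; ext ⟨y⟩
        show Bc (a + b) y = Bc a y + Bc b y
        simp
      map_smul' := by
        intro c a; ext ⟨y⟩
        show Bc (c • a) y = c * Bc a y
        simp } with hBc2
  have hker1 : K.toSubmodule ≤ LinearMap.ker Bc2 := by
    intro k hk
    have hk' := (hK k).mp hk
    simp only [LinearMap.mem_ker]
    ext ⟨y⟩
    show Bc k y = 0
    rw [hBc_apply]
    exact hk' (y : 𝔡) y.2
  refine ⟨Submodule.liftQ K.toSubmodule Bc2 hker1, ?_, ?_, ?_, ?_, ?_, ?_⟩
  · intro x y; rfl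
  · intro x y
    obtain ⟨x, rfl⟩ := Submodule.Quotient.mk_surjective _ x
    obtain ⟨y, rfl⟩ := Submodule.Quotient.mk_surjective _ y
    exact hsymm _ _
  · intro x hx
    obtain ⟨x, rfl⟩ := Submodule.Quotient.mk_surjective _ x
    have hxK : x ∈ K := by
      rw [hK]
      intro w hw
      exact hx (Submodule.Quotient.mk ⟨w, hw⟩)
    exact (Submodule.Quotient.mk_eq_zero _).mpr hxK
  · intro x y z
    obtain ⟨x, rfl⟩ := LieSubmodule.Quotient.surjective_mk' K x
    obtain ⟨y, rfl⟩ := LieSubmodule.Quotient.surjective_mk' K y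
    obtain ⟨z, rfl⟩ := LieSubmodule.Quotient.surjective_mk' K z
    have h1 : ⁅(LieSubmodule.Quotient.mk' K) x, (LieSubmodule.Quotient.mk' K) y⁆
        = (LieSubmodule.Quotient.mk' K) ⁅x, y⁆ := rfl
    have h2 : ⁅(LieSubmodule.Quotient.mk' K) x, (LieSubmodule.Quotient.mk' K) z⁆
        = (LieSubmodule.Quotient.mk' K) ⁅x, z⁆ := rfl
    rw [h1, h2]
    show B (⁅x, y⁆ : ↥𝔠) (z : 𝔡) + B (y : 𝔡) (⁅x, z⁆ : ↥𝔠) = 0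
    have c1 : ((⁅x, y⁆ : ↥𝔠) : 𝔡) = ⁅(x : 𝔡), (y : 𝔡)⁆ := rfl
    have c2 : ((⁅x, z⁆ : ↥𝔠) : 𝔡) = ⁅(x : 𝔡), (z : 𝔡)⁆ := rfl
    rw [c1, c2]
    exact hinv _ _ _
  · rintro x y ⟨g, hg, rfl⟩ ⟨g', hg', rfl⟩
    refine ⟨⁅g, g'⁆, ?_, rfl⟩
    exact 𝔤.lie_mem hg hg'
  · intro x
    constructor
    · rintro ⟨g, hg, rfl⟩ y ⟨g', hg', rfl⟩
      show B (g : 𝔡) (g' : 𝔡) = 0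
      have : (g' : 𝔡) ∈ orth B 𝔤.toSubmodule := by rw [hLag]; exact hg'
      rw [hsymm]
      exact this (g : 𝔡) hg
    · intro h
      obtain ⟨x, rfl⟩ := Submodule.Quotient.mk_surjective _ x
      have hxorth : (x : 𝔡) ∈ orth B 𝔤.toSubmodule := by
        intro w hw
        have := h (Submodule.Quotient.mk ⟨w, h𝔤𝔠 hw⟩) ⟨⟨w, h𝔤𝔠 hw⟩, hw, rfl⟩
        exact this
      have : (x : 𝔡) ∈ 𝔤.toSubmodule := by rw [← hLag]; exact hxorth
      exact ⟨x, this, rfl⟩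
end

section
/- In the setting of reduction of a moment map target: let 𝔡 be metrized with 𝔠 a subalgebra, 𝔨 = 𝔠^⊥ ⊆ 𝔠, 𝔡' = 𝔠/𝔨 with the induced metric, and let 𝔡_q ⊆ 𝔡 be a Lagrangian subspace with 𝔡_q ∩ 𝔨 = 0. Then the image of 𝔡_q ∩ 𝔠 under the quotient map 𝔠 → 𝔡' is a Lagrangian subspace of 𝔡'. -/
/-! Isotropy passes to the quotient because `B'(π x, π y) = B(x, y)`. For coisotropy, a vector
`c ∈ 𝔠` with `π c ⊥ π(𝔡_q ∩ 𝔠)` lies in `(𝔡_q ∩ 𝔠)^⊥ = 𝔡_q^⊥ + 𝔠^⊥ = 𝔡_q + 𝔨`; writing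
`c = d + k`, the summand `d` lies in `𝔠` because `𝔨 ⊆ 𝔠`, and `π c = π d`. -/

section Orth

variable {V : Type*} [AddCommGroup V] [Module ℝ V] {B : V →ₗ[ℝ] V →ₗ[ℝ] ℝ}

lemma orth_sup (U W : Submodule ℝ V) : orth B (U ⊔ W) = orth B U ⊓ orth B W := by
  ext x
  simp only [Submodule.mem_inf]
  refine ⟨fun h => ⟨fun u hu => h u (Submodule.mem_sup_left hu),
    fun w hw => h w (Submodule.mem_sup_right hw)⟩, ?_⟩
  rintro ⟨hU, hW⟩ _ hv
  obtain ⟨u, hu, w, hw, rfl⟩ := Submodule.mem_sup.mp hv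
  rw [map_add, hU u hu, hW w hw, add_zero]

variable [FiniteDimensional ℝ V] (hsymm : ∀ x y : V, B x y = B y x)
  (hnondeg : ∀ x : V, (∀ y : V, B x y = 0) → x = 0)
include hsymm hnondeg

lemma orth_orth (W : Submodule ℝ V) : orth B (orth B W) = W := by
  have horth : ∀ U, orth B U = LinearMap.BilinForm.orthogonal B U := fun U => by
    ext x
    exact forall₂_congr fun w _ => by rw [hsymm]
  rw [horth, horth]
  exact LinearMap.BilinForm.orthogonal_orthogonal
    ⟨hnondeg, fun y hy => hnondeg y fun x => by rw [hsymm]; exact hy x⟩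
    (fun x y h => by rw [hsymm]; exact h) W

lemma orth_inf (U W : Submodule ℝ V) : orth B (U ⊓ W) = orth B U ⊔ orth B W := by
  conv_lhs => rw [← orth_orth hsymm hnondeg U, ← orth_orth hsymm hnondeg W, ← orth_sup]
  exact orth_orth hsymm hnondeg _

end Orth

section Reduction

variable {V : Type*} [AddCommGroup V] [Module ℝ V] {B : V →ₗ[ℝ] V →ₗ[ℝ] ℝ}
  {C : Submodule ℝ V} {K : Submodule ℝ C} {B' : (C ⧸ K) →ₗ[ℝ] (C ⧸ K) →ₗ[ℝ] ℝ}
  (hB' : ∀ x y : C, B' (K.mkQ x) (K.mkQ y) = B x y)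
include hB'

lemma map_mkQ_comap_le_orth_of_le_orth {L : Submodule ℝ V} (hL : L ≤ orth B L) :
    (L.comap C.subtype).map K.mkQ ≤ orth B' ((L.comap C.subtype).map K.mkQ) := by
  rintro _ ⟨x, hx, rfl⟩ _ ⟨y, hy, rfl⟩
  rw [hB']
  exact hL hx y hy

lemma orth_map_mkQ_comap_le_of_orth_le [FiniteDimensional ℝ V]
    (hsymm : ∀ x y : V, B x y = B y x) (hnondeg : ∀ x : V, (∀ y : V, B x y = 0) → x = 0)
    (hco : orth B C ≤ C) (hK : (orth B C).comap C.subtype ≤ K)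
    {L : Submodule ℝ V} (hL : orth B L ≤ L) :
    orth B' ((L.comap C.subtype).map K.mkQ) ≤ (L.comap C.subtype).map K.mkQ := by
  intro ξ hξ
  obtain ⟨c, rfl⟩ := K.mkQ_surjective ξ
  have hc : (c : V) ∈ orth B L ⊔ orth B C := by
    rw [← orth_inf hsymm hnondeg]
    rintro w ⟨hwL, hwC⟩
    rw [← hB' c ⟨w, hwC⟩]
    exact hξ _ ⟨⟨w, hwC⟩, hwL, rfl⟩
  obtain ⟨d, hd, k, hk, hdk⟩ := Submodule.mem_sup.mp hc
  have hdC : d ∈ C := by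
    rw [← add_sub_cancel_right d k, hdk]
    exact C.sub_mem c.2 (hco hk)
  refine ⟨⟨d, hdC⟩, hL hd, (Submodule.Quotient.eq K).mpr ?_⟩
  apply hK
  rw [Submodule.mem_comap, Submodule.coe_subtype, Submodule.coe_sub, ← hdk, sub_add_cancel_left]
  exact neg_mem hk

end Reduction

theorem stmt5_general (𝔡 : Type*) [AddCommGroup 𝔡] [Module ℝ 𝔡] [FiniteDimensional ℝ 𝔡]
    (B : 𝔡 →ₗ[ℝ] 𝔡 →ₗ[ℝ] ℝ)
    (hsymm : ∀ x y : 𝔡, B x y = B y x)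
    (hnondeg : ∀ x : 𝔡, (∀ y : 𝔡, B x y = 0) → x = 0)
    (𝔠 : Submodule ℝ 𝔡) (hco : orth B 𝔠 ≤ 𝔠)
    -- the ideal 𝔨 = 𝔠^⊥, viewed inside ↥𝔠
    (K : Submodule ℝ ↥𝔠) (hKdef : K = (orth B 𝔠).comap 𝔠.subtype)
    -- the induced metric on 𝔡' = 𝔠/𝔨
    (B' : (↥𝔠 ⧸ K) →ₗ[ℝ] (↥𝔠 ⧸ K) →ₗ[ℝ] ℝ)
    (hB' : ∀ x y : ↥𝔠, B' (K.mkQ x) (K.mkQ y) = B (x : 𝔡) (y : 𝔡))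
    -- a Lagrangian subspace intersecting 𝔨 trivially
    (Dq : Submodule ℝ 𝔡) (hDq : orth B Dq = Dq) :
    orth B' (Submodule.map K.mkQ (Dq.comap 𝔠.subtype)) =
      Submodule.map K.mkQ (Dq.comap 𝔠.subtype) :=
  le_antisymm
    (orth_map_mkQ_comap_le_of_orth_le hB' hsymm hnondeg hco hKdef.ge hDq.le)
    (map_mkQ_comap_le_orth_of_le_orth hB' hDq.ge)

/-- Reduction of Lagrangian subspaces: with 𝔨 = 𝔠^⊥ ⊆ 𝔠 and
𝔡' = 𝔠/𝔨 carrying the induced metric B' (characterized by B'(π x, π y) = B(x,y)),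
if 𝔡_q ⊆ 𝔡 is Lagrangian with 𝔡_q ∩ 𝔨 = 0 then the image of 𝔡_q ∩ 𝔠 under the quotient
map 𝔠 → 𝔡' is a Lagrangian subspace of 𝔡'. -/
theorem stmt5 (𝔡 : Type*) [AddCommGroup 𝔡] [Module ℝ 𝔡] [FiniteDimensional ℝ 𝔡]
    (B : 𝔡 →ₗ[ℝ] 𝔡 →ₗ[ℝ] ℝ)
    (hsymm : ∀ x y : 𝔡, B x y = B y x)
    (hnondeg : ∀ x : 𝔡, (∀ y : 𝔡, B x y = 0) → x = 0)
    (𝔠 : Submodule ℝ 𝔡) (hco : orth B 𝔠 ≤ 𝔠)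
    -- the ideal 𝔨 = 𝔠^⊥, viewed inside ↥𝔠
    (K : Submodule ℝ ↥𝔠) (hKdef : K = (orth B 𝔠).comap 𝔠.subtype)
    -- the induced metric on 𝔡' = 𝔠/𝔨
    (B' : (↥𝔠 ⧸ K) →ₗ[ℝ] (↥𝔠 ⧸ K) →ₗ[ℝ] ℝ)
    (hB' : ∀ x y : ↥𝔠, B' (K.mkQ x) (K.mkQ y) = B (x : 𝔡) (y : 𝔡))
    -- a Lagrangian subspace intersecting 𝔨 trivially
    (Dq : Submodule ℝ 𝔡) (hDq : orth B Dq = Dq) (hfree : Dq ⊓ orth B 𝔠 = ⊥) :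
    orth B' (Submodule.map K.mkQ (Dq.comap 𝔠.subtype)) =
      Submodule.map K.mkQ (Dq.comap 𝔠.subtype) :=
  stmt5_general 𝔡 B hsymm hnondeg 𝔠 hco K hKdef B' hB' Dq hDq
end

section
/- Kernel characterization for quasi-symplectic spaces (pointwise linear algebra): let 𝔡 be a metrized vector space with Lagrangian subspaces 𝔤 and 𝔡_q, let σ: V → 𝔡 be an injective linear map with Lagrangian image complementary to 𝔡_q, let ω be a skew bilinear form on a vector space T, and let f: T → V a linear map, such that: (a) for every ξ ∈ 𝔤 there is a distinguished vector ξ_T ∈ T with ω(ξ_T, ·) = −⟨σ(f(·)), ξ⟩, and (b) ker(f) ∩ ker(ω) = 0. Then ker(ω) = {ξ_T : ξ ∈ 𝔤, ⟨σ(v), ξ⟩ = 0 for all v ∈ V}. -/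
/-- Kernel characterization for quasi-symplectic spaces (pointwise linear
algebra).  With T = T_mM, V = T_qQ, f = T_mΦ, ω = ω_m, σ = α_q the splitting (injective,
with Lagrangian image complementary to the stabilizer 𝔡_q = ker a), act ξ = ξ_M(m), the
moment map condition (a): ω(ξ_T, ·) = −⟨σ(f(·)), ξ⟩, the compatibility f(ξ_T) = a(ξ) and
the nondegeneracy condition (b): ker f ∩ ker ω = 0, one has
ker ω = {ξ_T : ξ ∈ 𝔤, ⟨σ(v), ξ⟩ = 0 for all v}. -/
theorem stmt14 (𝔡 V T : Type*)
    [AddCommGroup 𝔡] [Module ℝ 𝔡] [AddCommGroup V] [Module ℝ V]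
    [AddCommGroup T] [Module ℝ T]
    (B : 𝔡 →ₗ[ℝ] 𝔡 →ₗ[ℝ] ℝ)
    (hsymm : ∀ x y : 𝔡, B x y = B y x)
    (hnondeg : ∀ x : 𝔡, (∀ y : 𝔡, B x y = 0) → x = 0)
    (𝔤 Dq : Submodule ℝ 𝔡)
    (h𝔤 : orth B 𝔤 = 𝔤) (hDq : orth B Dq = Dq)
    (σ : V →ₗ[ℝ] 𝔡) (hσinj : Function.Injective σ)
    (hσLag : orth B (LinearMap.range σ) = LinearMap.range σ)
    (hcompl₁ : Dq ⊓ LinearMap.range σ = ⊥)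
    (hcompl₂ : Dq ⊔ LinearMap.range σ = ⊤)
    (a : 𝔡 →ₗ[ℝ] V) (hkera : LinearMap.ker a = Dq)
    (hsec : ∀ v : V, a (σ v) = v)
    (ω : T →ₗ[ℝ] T →ₗ[ℝ] ℝ) (hskew : ∀ s t : T, ω s t = - ω t s)
    (f : T →ₗ[ℝ] V) (act : ↥𝔤 →ₗ[ℝ] T)
    (hmoment : ∀ (ξ : ↥𝔤) (t : T), ω (act ξ) t = - B (σ (f t)) (ξ : 𝔡))
    (hcompat : ∀ ξ : ↥𝔤, f (act ξ) = a (ξ : 𝔡))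
    (htransnd : ∀ t : T, f t = 0 → (∀ s : T, ω t s = 0) → t = 0) :
    ∀ t : T, (∀ s : T, ω t s = 0) ↔
      ∃ ξ : ↥𝔤, (∀ v : V, B (σ v) (ξ : 𝔡) = 0) ∧ t = act ξ := by
  intro t
  constructor
  · intro ht
    have hmem : σ (f t) ∈ 𝔤 := by
      rw [← h𝔤]
      intro w hw
      have h1 := hmoment ⟨w, hw⟩ t
      have h2 : ω (act ⟨w, hw⟩) t = 0 := by rw [hskew, ht]; ring
      rw [h2] at h1
      linarith
    have hmemσ : σ (f t) ∈ orth B (LinearMap.range σ) := by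
      rw [hσLag]; exact ⟨f t, rfl⟩
    refine ⟨⟨σ (f t), hmem⟩, ?_, ?_⟩
    · intro v
      have := hmemσ (σ v) ⟨v, rfl⟩
      rw [hsymm]; exact this
    · have hf : f (t - act ⟨σ (f t), hmem⟩) = 0 := by
        simp [hcompat, hsec]
      have hω : ∀ s, ω (t - act ⟨σ (f t), hmem⟩) s = 0 := by
        intro s
        have h1 := hmoment ⟨σ (f t), hmem⟩ s
        have h2 : B (σ (f s)) (σ (f t)) = 0 := by
          have := hmemσ (σ (f s)) ⟨f s, rfl⟩
          rw [hsymm]; exact this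
        simp only [map_sub, LinearMap.sub_apply, ht s, h1, h2]
        ring
      exact sub_eq_zero.mp (htransnd _ hf hω)
  · rintro ⟨ξ, hξ, rfl⟩ s
    rw [hmoment, hξ (f s), neg_zero]
end
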